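/- Let Φ : [0,∞) → (−∞,∞] be convex and finite on (0,∞), and define Φ̂(y) = Φ(y) for y ≥ 1 and Φ̂(y) = Φ(1) + l*(y−1) for 0 ≤ y < 1, where l* is the left derivative of Φ at 1. Then Φ̂ is a real-valued convex function on [0,∞) with Φ̂ ≤ Φ, and Φ̂(y) = Φ(y) for y ≥ 1; moreover if Φ satisfies the growth condition (for each [λ₀,λ₁] ⊂ (0,∞) there exist α,β>0 with Φ⁺(λy) ≤ αΦ⁺(y)+β(y+1) for y>0, λ∈[λ₀,λ₁]), then so does Φ̂. -/

import Mathlib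

open Set ENNReal

noncomputable section

/-- Positive part of an extended-real value, as an extended nonnegative real. -/
def epos (x : EReal) : ℝ≥0∞ := if x = ⊤ then ⊤ else ENNReal.ofReal x.toReal

/-- Convexity of `Φ : [0,∞) → (−∞,∞]` on the nonnegative half-line. -/
def ConvexOnNonneg (Φ : ℝ → EReal) : Prop :=
  ∀ x ∈ Ici (0:ℝ), ∀ y ∈ Ici (0:ℝ), ∀ t ∈ Icc (0:ℝ) 1,
    Φ (t * x + (1 - t) * y) ≤ (t : EReal) * Φ x + ((1 - t : ℝ) : EReal) * Φ y

/-- The growth condition on `Φ` (reasonable asymptotic elasticity). -/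
def GrowthCond (Φ : ℝ → EReal) : Prop :=
  ∀ l0 l1 : ℝ, 0 < l0 → l0 ≤ l1 → ∃ a : ℝ, 0 < a ∧ ∃ b : ℝ, 0 < b ∧
    ∀ y : ℝ, 0 < y → ∀ l ∈ Icc l0 l1,
      epos (Φ (l * y)) ≤ ENNReal.ofReal a * epos (Φ y) + ENNReal.ofReal (b * (y + 1))

lemma epos_coe (r : ℝ) : epos (r : EReal) = ENNReal.ofReal r := by
  simp [epos, EReal.coe_ne_top]

lemma epos_mono {x y : EReal} (h : x ≤ y) : epos x ≤ epos y := by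
  unfold epos
  by_cases hy : y = ⊤
  · simp [hy]
  · have hx : x ≠ ⊤ := fun hxt => hy (top_le_iff.mp (hxt ▸ h))
    rw [if_neg hx, if_neg hy]
    by_cases hxb : x = ⊥
    · simp [hxb]
    · exact ENNReal.ofReal_le_ofReal (EReal.toReal_le_toReal h hxb hy)

/-- Let `Φ̂` coincide with `Φ` on `[1,∞)` and be affine on `[0,1)` with slope the
left derivative `l` of `Φ` at `1`. Then `Φ̂` is real-valued and convex on `[0,∞)`,
satisfies `Φ̂ ≤ Φ` there, agrees with `Φ` on `[1,∞)`, and inherits the growth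
condition from `Φ`. -/
theorem phiHat_properties (Φ : ℝ → EReal) (hconv : ConvexOnNonneg Φ)
    (hfin : ∀ x : ℝ, 0 < x → Φ x ≠ ⊤) (hbot : ∀ x : ℝ, 0 ≤ x → Φ x ≠ ⊥)
    (l : ℝ)
    (hl : IsLUB {r : ℝ | ∃ y : ℝ, 0 < y ∧ y < 1 ∧
      r = ((Φ 1).toReal - (Φ y).toReal) / (1 - y)} l) :
    let Φhat : ℝ → EReal := fun y =>
      if 1 ≤ y then Φ y else (((Φ 1).toReal + l * (y - 1) : ℝ) : EReal)
    (∀ y : ℝ, 0 ≤ y → Φhat y ≠ ⊤ ∧ Φhat y ≠ ⊥)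
      ∧ ConvexOnNonneg Φhat
      ∧ (∀ y : ℝ, 0 ≤ y → Φhat y ≤ Φ y)
      ∧ (∀ y : ℝ, 1 ≤ y → Φhat y = Φ y)
      ∧ (GrowthCond Φ → GrowthCond Φhat) := by
  intro Φhat
  set Φr : ℝ → ℝ := fun x => (Φ x).toReal with hΦrdef
  have hΦhat : ∀ y : ℝ, Φhat y =
      if 1 ≤ y then Φ y else ((Φr 1 + l * (y - 1) : ℝ) : EReal) := fun y => rfl
  have hco : ∀ x : ℝ, 0 < x → Φ x = ((Φr x : ℝ) : EReal) := fun x hx =>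
    (EReal.coe_toReal (hfin x hx) (hbot x hx.le)).symm
  -- real convexity of Φr on (0, ∞)
  have hconvR : ConvexOn ℝ (Ioi 0) Φr := by
    constructor
    · exact convex_Ioi 0
    · intro x hx y hy a b ha hb hab
      simp only [smul_eq_mul]
      have hx' : (0:ℝ) < x := hx
      have hy' : (0:ℝ) < y := hy
      have hmin : (0:ℝ) < min x y := lt_min hx' hy'
      have hz : 0 < a * x + b * y := by
        have h1 : a * (min x y) ≤ a * x := mul_le_mul_of_nonneg_left (min_le_left x y) ha
        have h2 : b * (min x y) ≤ b * y := mul_le_mul_of_nonneg_left (min_le_right x y) hb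
        nlinarith
      have hb' : 1 - a = b := by linarith
      have key := hconv x hx'.le y hy'.le a ⟨ha, by linarith⟩
      rw [hb'] at key
      rw [hco x hx', hco y hy', ← EReal.coe_mul, ← EReal.coe_mul, ← EReal.coe_add] at key
      have := EReal.toReal_le_toReal key (hbot _ hz.le) (EReal.coe_ne_top _)
      rw [EReal.toReal_coe] at this
      exact this
  -- slopes
  have hl_ge : ∀ u : ℝ, 0 < u → u < 1 → (Φr 1 - Φr u) / (1 - u) ≤ l := fun u h0 h1 =>
    hl.1 ⟨u, h0, h1, rfl⟩
  have hl_le : ∀ z : ℝ, 1 < z → l ≤ (Φr z - Φr 1) / (z - 1) := by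
    intro z hz
    refine hl.2 fun r hr => ?_
    obtain ⟨u, hu0, hu1, rfl⟩ := hr
    exact hconvR.slope_mono_adjacent hu0 (by positivity : (0:ℝ) < z) hu1 hz
  -- the affine minorant
  have hAle : ∀ y : ℝ, 0 < y → Φr 1 + l * (y - 1) ≤ Φr y := by
    intro y hy
    rcases lt_trichotomy y 1 with h | h | h
    · have := hl_ge y hy h
      rw [div_le_iff₀ (by linarith : (0:ℝ) < 1 - y)] at this
      nlinarith
    · subst h; simp
    · have := hl_le y h
      rw [le_div_iff₀ (by linarith : (0:ℝ) < y - 1)] at this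
      nlinarith
  -- the real version of Φhat
  set f : ℝ → ℝ := fun y => if 1 ≤ y then Φr y else Φr 1 + l * (y - 1) with hfdef
  have hfA : ∀ y : ℝ, y ≤ 1 → f y = Φr 1 + l * (y - 1) := by
    intro y hy
    by_cases h : 1 ≤ y
    · have : y = 1 := le_antisymm hy h
      subst this; simp [hfdef]
    · simp [hfdef, h]
  have hfB : ∀ y : ℝ, 1 ≤ y → f y = Φr y := by
    intro y hy; simp [hfdef, hy]
  have hfconv : ConvexOn ℝ (Ici 0) f := by
    refine convexOn_of_slope_mono_adjacent (convex_Ici 0) ?_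
    intro x y z hx hz hxy hyz
    have hx0 : (0:ℝ) ≤ x := hx
    have hy0 : (0:ℝ) < y := lt_of_le_of_lt hx0 hxy
    have hz0 : (0:ℝ) < z := hy0.trans hyz
    by_cases hz1 : z ≤ 1
    · rw [hfA x (by linarith), hfA y (by linarith), hfA z hz1]
      have h1 : Φr 1 + l * (y - 1) - (Φr 1 + l * (x - 1)) = l * (y - x) := by ring
      have h2 : Φr 1 + l * (z - 1) - (Φr 1 + l * (y - 1)) = l * (z - y) := by ring
      rw [h1, h2, mul_div_assoc, mul_div_assoc,
        div_self (by linarith : y - x ≠ 0), div_self (by linarith : z - y ≠ 0)]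
    push_neg at hz1
    by_cases hy1 : y ≤ 1
    · rw [hfA x (by linarith), hfA y hy1, hfB z hz1.le]
      have h1 : Φr 1 + l * (y - 1) - (Φr 1 + l * (x - 1)) = l * (y - x) := by ring
      rw [h1, mul_div_assoc, div_self (by linarith : y - x ≠ 0), mul_one]
      rw [le_div_iff₀ (by linarith : (0:ℝ) < z - y)]
      have := hAle z hz0
      nlinarith
    push_neg at hy1
    rw [hfB y hy1.le, hfB z hz1.le]
    by_cases hx1 : 1 ≤ x
    · rw [hfB x hx1]
      exact hconvR.slope_mono_adjacent (by linarith : (0:ℝ) < x) hz0 hxy hyz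
    push_neg at hx1
    rw [hfA x hx1.le]
    have hs1 : (Φr y - Φr 1) / (y - 1) ≤ (Φr z - Φr y) / (z - y) :=
      hconvR.slope_mono_adjacent (by norm_num : (0:ℝ) < 1) hz0 hy1 hyz
    have hs0 : l ≤ (Φr y - Φr 1) / (y - 1) := hl_le y hy1
    set s := (Φr y - Φr 1) / (y - 1) with hsdef
    have hy1' : (0:ℝ) < y - 1 := by linarith
    have hnum : Φr y - Φr 1 = s * (y - 1) := (div_mul_cancel₀ _ hy1'.ne').symm
    refine le_trans ?_ hs1
    rw [div_le_iff₀ (by linarith : (0:ℝ) < y - x)]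
    have hmul : l * (1 - x) ≤ s * (1 - x) :=
      mul_le_mul_of_nonneg_right hs0 (by linarith)
    nlinarith
  have hhat : ∀ y : ℝ, 0 ≤ y → Φhat y = ((f y : ℝ) : EReal) := by
    intro y hy
    rw [hΦhat y]
    by_cases h1 : 1 ≤ y
    · rw [if_pos h1, hfB y h1]
      exact hco y (by linarith)
    · rw [if_neg h1, hfA y (le_of_not_ge h1)]
  refine ⟨?_, ?_, ?_, ?_, ?_⟩
  · -- finiteness
    intro y hy
    rw [hhat y hy]
    exact ⟨EReal.coe_ne_top _, EReal.coe_ne_bot _⟩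
  · -- convexity
    intro x hx y hy t ht
    have hx0 : (0:ℝ) ≤ x := hx
    have hy0 : (0:ℝ) ≤ y := hy
    have ht0 : (0:ℝ) ≤ t := ht.1
    have ht1 : (0:ℝ) ≤ 1 - t := by linarith [ht.2]
    have hz : 0 ≤ t * x + (1 - t) * y := add_nonneg (mul_nonneg ht0 hx0) (mul_nonneg ht1 hy0)
    rw [hhat _ hz, hhat x hx0, hhat y hy0, ← EReal.coe_mul, ← EReal.coe_mul,
      ← EReal.coe_add, EReal.coe_le_coe_iff]
    have := hfconv.2 hx hy ht0 ht1 (by ring : t + (1 - t) = 1)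
    simpa using this
  · -- Φhat ≤ Φ
    intro y hy
    rw [hΦhat y]
    by_cases h1 : 1 ≤ y
    · rw [if_pos h1]
    · rw [if_neg h1]
      push_neg at h1
      rcases eq_or_lt_of_le hy with h0 | h0
      · -- y = 0
        subst h0
        by_cases htop : Φ 0 = ⊤
        · rw [htop]; exact le_top
        · have hco0 : Φ 0 = ((Φr 0 : ℝ) : EReal) := (EReal.coe_toReal htop (hbot 0 le_rfl)).symm
          rw [hco0, EReal.coe_le_coe_iff]
          have key := hconv 1 (by norm_num) 0 Set.self_mem_Ici (1/2) (by norm_num)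
          rw [hco 1 one_pos, hco0] at key
          have hhalf : (1:ℝ)/2 * 1 + (1 - 1/2) * 0 = 1/2 := by norm_num
          rw [hhalf] at key
          rw [hco (1/2) (by norm_num), ← EReal.coe_mul, ← EReal.coe_mul,
            ← EReal.coe_add, EReal.coe_le_coe_iff] at key
          have hslope := hl_ge (1/2) (by norm_num) (by norm_num)
          rw [div_le_iff₀ (by norm_num : (0:ℝ) < 1 - 1/2)] at hslope
          nlinarith
      · -- 0 < y < 1
        rw [hco y h0, EReal.coe_le_coe_iff]
        have := hl_ge y h0 h1
        rw [div_le_iff₀ (by linarith : (0:ℝ) < 1 - y)] at this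
        nlinarith
  · -- agreement on [1, ∞)
    intro y hy
    rw [hΦhat y, if_pos hy]
  · -- growth condition
    intro hG l0 l1 hl0 hl01
    obtain ⟨a, ha, b, hb, hab⟩ := hG l0 l1 hl0 hl01
    set m := max 1 l1 with hmdef
    have hm1 : (1:ℝ) ≤ m := le_max_left _ _
    have hbound : ∀ z : ℝ, 1 ≤ z → z ≤ m → Φr z ≤ max (Φr 1) (Φr m) := by
      intro z h1 h2
      rcases eq_or_lt_of_le h1 with h1' | h1'
      · rw [← h1']; exact le_max_left _ _
      rcases eq_or_lt_of_le h2 with h2' | h2'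
      · rw [h2']; exact le_max_right _ _
      have hm1' : (1:ℝ) < m := h1'.trans h2'
      have hd : (0:ℝ) < m - 1 := by linarith
      set p := (m - z) / (m - 1) with hpdef
      set q := (z - 1) / (m - 1) with hqdef
      have hp : 0 ≤ p := div_nonneg (by linarith) hd.le
      have hq : 0 ≤ q := div_nonneg (by linarith) hd.le
      have hpq : p + q = 1 := by
        rw [hpdef, hqdef, ← add_div, div_eq_one_iff_eq hd.ne']; ring
      have hcomb : p • (1:ℝ) + q • m = z := by
        simp only [smul_eq_mul, hpdef, hqdef]
        field_simp
        ring
      have key := hconvR.2 (by norm_num : (1:ℝ) ∈ Ioi 0)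
        (by simp only [mem_Ioi]; linarith : m ∈ Ioi (0:ℝ)) hp hq hpq
      rw [hcomb] at key
      simp only [smul_eq_mul] at key
      have e1 : Φr 1 ≤ max (Φr 1) (Φr m) := le_max_left _ _
      have e2 : Φr m ≤ max (Φr 1) (Φr m) := le_max_right _ _
      have e3 : p * Φr 1 + q * Φr m ≤ p * max (Φr 1) (Φr m) + q * max (Φr 1) (Φr m) :=
        add_le_add (mul_le_mul_of_nonneg_left e1 hp) (mul_le_mul_of_nonneg_left e2 hq)
      have e4 : p * max (Φr 1) (Φr m) + q * max (Φr 1) (Φr m) = max (Φr 1) (Φr m) := by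
        rw [← add_mul, hpq, one_mul]
      linarith
    set K := max (max (Φr 1) (Φr m)) 0 with hKdef
    have hK0 : 0 ≤ K := le_max_right _ _
    set C := |Φr 1| + |l| with hCdef
    have hC0 : 0 ≤ C := by positivity
    set b' := b + K + C + 1 with hb'def
    have hb'pos : 0 < b' := by positivity
    have hbb' : b ≤ b' := by linarith
    refine ⟨a, ha, b', hb'pos, ?_⟩
    intro y hy0 lam hlam
    have hlam0 : 0 < lam := lt_of_lt_of_le hl0 hlam.1
    by_cases hly : 1 ≤ lam * y
    · have e1 : Φhat (lam * y) = Φ (lam * y) := by rw [hΦhat, if_pos hly]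
      by_cases hy1 : 1 ≤ y
      · have e2 : Φhat y = Φ y := by rw [hΦhat, if_pos hy1]
        rw [e1, e2]
        refine le_trans (hab y hy0 lam hlam) ?_
        gcongr
      · push_neg at hy1
        have hzm : lam * y ≤ m := by
          have hl1pos : 0 < l1 := hlam0.trans_le hlam.2
          have h1 : lam * y ≤ l1 * y := mul_le_mul_of_nonneg_right hlam.2 hy0.le
          have h2 : l1 * y ≤ l1 := by nlinarith
          linarith [le_max_right (1:ℝ) l1]
        have hzb := hbound (lam * y) hly hzm
        rw [e1, hco _ (by positivity : (0:ℝ) < lam * y), epos_coe]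
        have hbd : Φr (lam * y) ≤ b' * (y + 1) := by
          have h1 : max (Φr 1) (Φr m) ≤ K := le_max_left _ _
          nlinarith
        calc ENNReal.ofReal (Φr (lam * y)) ≤ ENNReal.ofReal (b' * (y + 1)) :=
              ENNReal.ofReal_le_ofReal hbd
          _ ≤ ENNReal.ofReal a * epos (Φhat y) + ENNReal.ofReal (b' * (y + 1)) :=
              le_add_self
    · push_neg at hly
      have e1 : Φhat (lam * y) = ((Φr 1 + l * (lam * y - 1) : ℝ) : EReal) := by
        rw [hΦhat, if_neg (not_le.mpr hly)]
      rw [e1, epos_coe]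
      have hz0 : 0 < lam * y := by positivity
      have habs : |lam * y - 1| ≤ 1 := abs_le.mpr ⟨by linarith, by linarith⟩
      have hC : Φr 1 + l * (lam * y - 1) ≤ C := by
        have h1 : l * (lam * y - 1) ≤ |l| := by
          calc l * (lam * y - 1) ≤ |l * (lam * y - 1)| := le_abs_self _
            _ = |l| * |lam * y - 1| := abs_mul _ _
            _ ≤ |l| * 1 := mul_le_mul_of_nonneg_left habs (abs_nonneg l)
            _ = |l| := mul_one _
        have h2 : Φr 1 ≤ |Φr 1| := le_abs_self _
        rw [hCdef]; linarith
      have hbd : Φr 1 + l * (lam * y - 1) ≤ b' * (y + 1) := by nlinarith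
      calc ENNReal.ofReal (Φr 1 + l * (lam * y - 1)) ≤ ENNReal.ofReal (b' * (y + 1)) :=
            ENNReal.ofReal_le_ofReal hbd
        _ ≤ ENNReal.ofReal a * epos (Φhat y) + ENNReal.ofReal (b' * (y + 1)) :=
            le_add_self
end
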